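/- Let p be a strictly positive joint probability mass function of random variables (X_1, …, X_d, Y) on finite types. Fix i ∈ {1,…,d} and a subset S ⊆ {1,…,d} with i ∈ S, and let ε ≥ 0. Suppose that for every U ⊆ S \ {i} and every V ⊆ {1,…,d} \ S, both I_a(X_i; X_V | X_U, Y) ≤ ε and I_a(X_i; X_V | X_U) ≤ ε. Then the expected absolute error between the restricted Shapley estimate and the Shapley value satisfies E_X | φ̂^S_X(i) − φ_X(i) | ≤ 2ε, where the expectation is over X drawn from the marginal distribution of p. -/

import Mathlib

open scoped Classical BigOperators

variable {d : ℕ} {𝒳 : Fin d → Type*} [∀ j, Fintype (𝒳 j)] {𝒴 : Type*} [Fintype 𝒴]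

/-- The joint marginal probability `p(x_S, y)` of `(X_S, Y)` at the restriction of `x` to `S`. -/
noncomputable def margXY (p : (∀ j, 𝒳 j) → 𝒴 → ℝ) (S : Finset (Fin d))
    (x : ∀ j, 𝒳 j) (y : 𝒴) : ℝ :=
  ∑ x' : ∀ j, 𝒳 j, if ∀ j ∈ S, x' j = x j then p x' y else 0

/-- The marginal probability `p(x_S)` of `X_S` at the restriction of `x` to `S`. -/
noncomputable def margX (p : (∀ j, 𝒳 j) → 𝒴 → ℝ) (S : Finset (Fin d))
    (x : ∀ j, 𝒳 j) : ℝ :=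
  ∑ y, margXY p S x y

/-- The marginal probability `p(x)` of the full feature vector `X`. -/
noncomputable def pX (p : (∀ j, 𝒳 j) → 𝒴 → ℝ) (x : ∀ j, 𝒳 j) : ℝ :=
  ∑ y, p x y

/-- The conditional probability `p(y | x_S) = p(y, x_S) / p(x_S)`
(for `S = ∅` this is `p(y)` when `p` sums to one). -/
noncomputable def condY (p : (∀ j, 𝒳 j) → 𝒴 → ℝ) (S : Finset (Fin d))
    (x : ∀ j, 𝒳 j) (y : 𝒴) : ℝ :=
  margXY p S x y / margX p S x

/-- The importance score `v_x(S) = ∑_y p(y | x) log p(y | x_S)`. -/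
noncomputable def impScore (p : (∀ j, 𝒳 j) → 𝒴 → ℝ) (x : ∀ j, 𝒳 j)
    (S : Finset (Fin d)) : ℝ :=
  ∑ y, condY p Finset.univ x y * Real.log (condY p S x y)

/-- The marginal contribution `m_x(S, i) = v_x(S) − v_x(S \ {i})`. -/
noncomputable def margContrib (p : (∀ j, 𝒳 j) → 𝒴 → ℝ) (x : ∀ j, 𝒳 j)
    (S : Finset (Fin d)) (i : Fin d) : ℝ :=
  impScore p x S - impScore p x (S.erase i)

/-- The Shapley value `φ_x(i)`. -/
noncomputable def shapley (p : (∀ j, 𝒳 j) → 𝒴 → ℝ) (x : ∀ j, 𝒳 j) (i : Fin d) : ℝ :=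
  (1 / (d : ℝ)) * ∑ A : Finset (Fin d),
    if i ∈ A then margContrib p x A i / ((d - 1).choose (A.card - 1) : ℝ) else 0

/-- The restricted Shapley estimate `φ̂^S_x(i)` over a feature subset `S` containing `i`. -/
noncomputable def shapleyRes (p : (∀ j, 𝒳 j) → 𝒴 → ℝ) (x : ∀ j, 𝒳 j)
    (S : Finset (Fin d)) (i : Fin d) : ℝ :=
  (1 / (S.card : ℝ)) * ∑ T ∈ S.powerset,
    if i ∈ T then margContrib p x T i / ((S.card - 1).choose (T.card - 1) : ℝ) else 0

/-- The absolute conditional mutual information `I_a(X_A; X_B | X_C)`. -/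
noncomputable def IaX (p : (∀ j, 𝒳 j) → 𝒴 → ℝ) (A B C : Finset (Fin d)) : ℝ :=
  ∑ x : ∀ j, 𝒳 j, pX p x *
    |Real.log ((margX p (A ∪ B ∪ C) x * margX p C x) /
      (margX p (A ∪ C) x * margX p (B ∪ C) x))|

/-- The absolute conditional mutual information `I_a(X_A; X_B | X_C, Y)`. -/
noncomputable def IaXY (p : (∀ j, 𝒳 j) → 𝒴 → ℝ) (A B C : Finset (Fin d)) : ℝ :=
  ∑ x : ∀ j, 𝒳 j, ∑ y, p x y *
    |Real.log ((margXY p (A ∪ B ∪ C) x y * margXY p C x y) /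
      (margXY p (A ∪ C) x y * margXY p (B ∪ C) x y))|

/-!
Group the coalitions `A ∋ i` of the Shapley sum by their traces `U = (A ∩ S) \ {i}` and
`V = A \ S`. By the Pascal-type rule `w(n+1, k) + w(n+1, k+1) = w(n, k)` for the Shapley weights,
summing `w(d, |U| + |V|)` over all `V ⊆ [d] \ S` gives back the restricted weight `w(|S|, |U|)`.
Hence `φ̂^S_x(i) − φ_x(i)` is a convex combination over the pairs `(U, V)` of
`m_x({i} ∪ U, i) − m_x({i} ∪ U ∪ V, i)`. Such a second difference of `v_x` equals the
`p(y | x)`-average of the difference of the two log-ratios whose absolute expectations are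
`I_a(X_i; X_V | X_U, Y)` and `I_a(X_i; X_V | X_U)`, so its expected absolute value is at most `2ε`.
-/

open Finset Real
open scoped Nat

namespace Finset

variable {α β : Type*} [DecidableEq α] [AddCommMonoid β]

lemma sum_powerset_ite_mem {s : Finset α} {a : α} (ha : a ∈ s) (f : Finset α → β) :
    ∑ t ∈ s.powerset, (if a ∈ t then f t else 0) =
      ∑ t ∈ (s.erase a).powerset, f (insert a t) := by
  conv_lhs => rw [← insert_erase ha, sum_powerset_insert (notMem_erase a s)]
  rw [sum_eq_zero fun t ht => if_neg (notMem_mono (mem_powerset.1 ht) (notMem_erase a s)),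
    zero_add]
  exact sum_congr rfl fun t _ => if_pos (mem_insert_self a t)

lemma sum_powerset_union_of_disjoint {s t : Finset α} (h : Disjoint s t) (f : Finset α → β) :
    ∑ u ∈ (s ∪ t).powerset, f u = ∑ u ∈ s.powerset, ∑ v ∈ t.powerset, f (u ∪ v) := by
  induction t using Finset.induction_on generalizing f with
  | empty => simp
  | insert b t hbt ih =>
    have hbs : b ∉ s := disjoint_right.1 h (mem_insert_self b t)
    have h' : Disjoint s t := h.mono_right (subset_insert b t)
    rw [union_insert, sum_powerset_insert (by simp [hbs, hbt]), ih h', ih h', ← sum_add_distrib]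
    refine sum_congr rfl fun u _ => ?_
    simp only [sum_powerset_insert hbt, union_insert]

end Finset

lemma sum_mul_abs_weighted_sum_le {ι κ : Type*} [Fintype κ] {s : Finset ι} {q : κ → ℝ}
    {w : ι → ℝ} {g : ι → κ → ℝ} {c : ℝ} (hq : ∀ x, 0 ≤ q x) (hw : ∀ k ∈ s, 0 ≤ w k)
    (hw1 : ∑ k ∈ s, w k = 1) (hg : ∀ k ∈ s, ∑ x, q x * |g k x| ≤ c) :
    ∑ x, q x * |∑ k ∈ s, w k * g k x| ≤ c :=
  calc ∑ x, q x * |∑ k ∈ s, w k * g k x|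
      ≤ ∑ x, ∑ k ∈ s, w k * (q x * |g k x|) := by
        refine sum_le_sum fun x _ => ?_
        refine (mul_le_mul_of_nonneg_left (abs_sum_le_sum_abs _ _) (hq x)).trans_eq ?_
        rw [mul_sum]
        refine sum_congr rfl fun k hk => ?_
        rw [abs_mul, abs_of_nonneg (hw k hk)]
        ring
    _ = ∑ k ∈ s, w k * ∑ x, q x * |g k x| := by
        rw [sum_comm]
        simp_rw [mul_sum]
    _ ≤ ∑ k ∈ s, w k * c := sum_le_sum fun k hk => mul_le_mul_of_nonneg_left (hg k hk) (hw k hk)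
    _ = c := by rw [← sum_mul, hw1, one_mul]

/-- The weight of the coalition `T ∪ {i}`, `|T| = k`, in the Shapley value of a game with `n`
players: the probability that the players preceding `i` in a uniform random order form `T`. -/
noncomputable def shapleyWeight (n k : ℕ) : ℝ := 1 / n / (n - 1).choose k

lemma shapleyWeight_nonneg (n k : ℕ) : 0 ≤ shapleyWeight n k := by
  unfold shapleyWeight
  positivity

lemma shapleyWeight_eq_factorial (k r : ℕ) :
    shapleyWeight (k + r + 1) k = k ! * r ! / (k + r + 1)! := by
  rw [shapleyWeight, Nat.add_sub_cancel, Nat.cast_add_choose, Nat.factorial_succ]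
  push_cast
  field_simp

lemma shapleyWeight_succ_add_succ {n k : ℕ} (hk : k < n) :
    shapleyWeight (n + 1) k + shapleyWeight (n + 1) (k + 1) = shapleyWeight n k := by
  obtain ⟨r, rfl⟩ := Nat.exists_eq_add_of_lt hk
  have h₁ := shapleyWeight_eq_factorial k (r + 1)
  have h₂ := shapleyWeight_eq_factorial (k + 1) r
  rw [show k + (r + 1) + 1 = k + r + 1 + 1 by ring] at h₁
  rw [show k + 1 + r + 1 = k + r + 1 + 1 by ring] at h₂
  rw [h₁, h₂, shapleyWeight_eq_factorial]
  simp only [Nat.factorial_succ]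
  push_cast
  field_simp
  ring

lemma sum_powerset_shapleyWeight {α : Type*} [DecidableEq α] {s u : ℕ} (hu : u < s)
    (W : Finset α) :
    ∑ V ∈ W.powerset, shapleyWeight (s + #W) (u + #V) = shapleyWeight s u := by
  induction W using Finset.induction_on with
  | empty => simp
  | insert a W haW ih =>
    rw [sum_powerset_insert haW, card_insert_of_notMem haW, ← ih, ← sum_add_distrib]
    refine sum_congr rfl fun V hV => ?_
    have hVW := card_le_card (mem_powerset.1 hV)
    rw [card_insert_of_notMem (notMem_mono (mem_powerset.1 hV) haW), ← add_assoc, ← add_assoc]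
    exact shapleyWeight_succ_add_succ (by omega)

lemma sum_powerset_shapleyWeight_card_add_one {α : Type*} [DecidableEq α] (T : Finset α) :
    ∑ U ∈ T.powerset, shapleyWeight (#T + 1) #U = 1 := by
  have h := sum_powerset_shapleyWeight one_pos T
  simpa [add_comm, shapleyWeight] using h

set_option linter.unusedSectionVars false

section ImportanceScore

variable {p : (∀ j, 𝒳 j) → 𝒴 → ℝ}

lemma margXY_pos (hpos : ∀ x y, 0 < p x y) (S : Finset (Fin d)) (x : ∀ j, 𝒳 j) (y : 𝒴) :
    0 < margXY p S x y :=
  sum_pos' (fun x' _ => by split_ifs <;> first | exact (hpos x' y).le | rfl)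
    ⟨x, mem_univ x, by simpa using hpos x y⟩

lemma margX_pos [Nonempty 𝒴] (hpos : ∀ x y, 0 < p x y) (S : Finset (Fin d)) (x : ∀ j, 𝒳 j) :
    0 < margX p S x :=
  sum_pos (fun y _ => margXY_pos hpos S x y) univ_nonempty

lemma condY_nonneg (hpos : ∀ x y, 0 < p x y) (S : Finset (Fin d)) (x : ∀ j, 𝒳 j) (y : 𝒴) :
    0 ≤ condY p S x y :=
  div_nonneg (margXY_pos hpos S x y).le (sum_nonneg fun y _ => (margXY_pos hpos S x y).le)

lemma pX_nonneg (hpos : ∀ x y, 0 < p x y) (x : ∀ j, 𝒳 j) : 0 ≤ pX p x :=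
  sum_nonneg fun y _ => (hpos x y).le

lemma margXY_univ (x : ∀ j, 𝒳 j) (y : 𝒴) : margXY p univ x y = p x y := by
  rw [margXY, sum_eq_single_of_mem x (mem_univ x) fun x' _ hx' =>
    if_neg fun h => hx' (funext fun j => h j (mem_univ j))]
  simp

lemma pX_mul_condY_univ (hpos : ∀ x y, 0 < p x y) (x : ∀ j, 𝒳 j) (y : 𝒴) :
    pX p x * condY p univ x y = p x y := by
  have hX : 0 < pX p x := sum_pos (fun y _ => hpos x y) ⟨y, mem_univ y⟩
  have hmargX : margX p univ x = pX p x := sum_congr rfl fun y _ => margXY_univ x y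
  rw [condY, margXY_univ, hmargX]
  field_simp

lemma impScore_interaction_eq (hpos : ∀ x y, 0 < p x y) (A B C : Finset (Fin d))
    (x : ∀ j, 𝒳 j) :
    impScore p x (A ∪ B ∪ C) - impScore p x (A ∪ C) - impScore p x (B ∪ C) + impScore p x C =
      ∑ y, condY p univ x y *
        (log (margXY p (A ∪ B ∪ C) x y * margXY p C x y /
            (margXY p (A ∪ C) x y * margXY p (B ∪ C) x y)) -
          log (margX p (A ∪ B ∪ C) x * margX p C x / (margX p (A ∪ C) x * margX p (B ∪ C) x))) := by
  simp only [impScore, ← sum_sub_distrib, ← sum_add_distrib]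
  refine sum_congr rfl fun y _ => ?_
  have : Nonempty 𝒴 := ⟨y⟩
  have hXY (T : Finset (Fin d)) : margXY p T x y ≠ 0 := (margXY_pos hpos T x y).ne'
  have hX (T : Finset (Fin d)) : margX p T x ≠ 0 := (margX_pos hpos T x).ne'
  simp only [condY, log_div, log_mul, hXY, hX, mul_ne_zero_iff, ne_eq, not_false_eq_true,
    and_self]
  ring

lemma sum_pX_mul_abs_impScore_interaction_le (hpos : ∀ x y, 0 < p x y)
    (A B C : Finset (Fin d)) :
    ∑ x, pX p x *
        |impScore p x (A ∪ B ∪ C) - impScore p x (A ∪ C) - impScore p x (B ∪ C) + impScore p x C|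
      ≤ IaXY p A B C + IaX p A B C := by
  rw [IaXY, IaX, ← sum_add_distrib]
  refine sum_le_sum fun x _ => ?_
  rw [impScore_interaction_eq hpos]
  set LX := log (margX p (A ∪ B ∪ C) x * margX p C x / (margX p (A ∪ C) x * margX p (B ∪ C) x))
  set LXY := fun y => log (margXY p (A ∪ B ∪ C) x y * margXY p C x y /
    (margXY p (A ∪ C) x y * margXY p (B ∪ C) x y))
  calc pX p x * |∑ y, condY p univ x y * (LXY y - LX)|
      ≤ ∑ y, pX p x * condY p univ x y * |LXY y - LX| := by
        refine (mul_le_mul_of_nonneg_left (abs_sum_le_sum_abs _ _) (pX_nonneg hpos x)).trans_eq ?_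
        rw [mul_sum]
        refine sum_congr rfl fun y _ => ?_
        rw [abs_mul, abs_of_nonneg (condY_nonneg hpos univ x y), mul_assoc]
    _ = ∑ y, p x y * |LXY y - LX| := by simp only [pX_mul_condY_univ hpos]
    _ ≤ ∑ y, (p x y * |LXY y| + p x y * |LX|) := by
        refine sum_le_sum fun y _ => ?_
        rw [← mul_add]
        exact mul_le_mul_of_nonneg_left (abs_sub _ _) (hpos x y).le
    _ = ∑ y, p x y * |LXY y| + pX p x * |LX| := by rw [sum_add_distrib, ← sum_mul, pX]

lemma sum_pX_mul_abs_margContrib_sub_le (hpos : ∀ x y, 0 < p x y) {i : Fin d}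
    {U V : Finset (Fin d)} (hiU : i ∉ U) (hiV : i ∉ V) :
    ∑ x, pX p x * |margContrib p x (insert i U) i - margContrib p x (insert i (U ∪ V)) i|
      ≤ IaXY p {i} V U + IaX p {i} V U := by
  refine le_of_eq_of_le (sum_congr rfl fun x _ => ?_)
    (sum_pX_mul_abs_impScore_interaction_le hpos {i} V U)
  have hiUV : i ∉ U ∪ V := by simp [hiU, hiV]
  rw [union_assoc, union_comm V U, ← insert_eq, ← insert_eq, margContrib, margContrib,
    erase_insert hiU, erase_insert hiUV, abs_sub_comm]
  ring_nf

end ImportanceScore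

section Decomposition

variable (p : (∀ j, 𝒳 j) → 𝒴 → ℝ) (x : ∀ j, 𝒳 j) {i : Fin d} {S : Finset (Fin d)}

lemma shapleyRes_univ : shapleyRes p x univ i = shapley p x i := by
  simp only [shapleyRes, shapley, card_univ, Fintype.card_fin, powerset_univ]

lemma shapleyRes_eq_sum_powerset_erase (hiS : i ∈ S) :
    shapleyRes p x S i =
      ∑ U ∈ (S.erase i).powerset, shapleyWeight #S #U * margContrib p x (insert i U) i := by
  rw [shapleyRes, mul_sum]
  simp only [mul_ite, mul_zero]
  rw [sum_powerset_ite_mem hiS]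
  refine sum_congr rfl fun U hU => ?_
  rw [card_insert_of_notMem (notMem_mono (mem_powerset.1 hU) (notMem_erase i S)),
    Nat.add_sub_cancel, shapleyWeight]
  ring

lemma sum_powerset_univ_sdiff_shapleyWeight (hiS : i ∈ S) {U : Finset (Fin d)}
    (hU : U ⊆ S.erase i) :
    ∑ V ∈ (univ \ S).powerset, shapleyWeight d (#U + #V) = shapleyWeight #S #U := by
  have hcard : #S + #(univ \ S) = d := by
    rw [← compl_eq_univ_sdiff, card_add_card_compl, Fintype.card_fin]
  rw [← sum_powerset_shapleyWeight ((card_le_card hU).trans_lt (card_erase_lt_of_mem hiS))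
    (univ \ S), hcard]

lemma shapleyRes_sub_shapley_eq (hiS : i ∈ S) :
    shapleyRes p x S i - shapley p x i =
      ∑ UV ∈ (S.erase i).powerset ×ˢ (univ \ S).powerset, shapleyWeight d (#UV.1 + #UV.2) *
        (margContrib p x (insert i UV.1) i - margContrib p x (insert i (UV.1 ∪ UV.2)) i) := by
  have hdisj : Disjoint (S.erase i) (univ \ S) :=
    disjoint_sdiff.mono_left (erase_subset i S)
  have hsplit : univ.erase i = S.erase i ∪ (univ \ S) := by
    ext j
    by_cases hj : j = i <;> simp [hj, hiS, em]
  rw [← shapleyRes_univ, shapleyRes_eq_sum_powerset_erase p x hiS,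
    shapleyRes_eq_sum_powerset_erase p x (mem_univ i), card_univ, Fintype.card_fin, hsplit,
    sum_powerset_union_of_disjoint hdisj, sum_product, ← sum_sub_distrib]
  refine sum_congr rfl fun U hU => ?_
  rw [← sum_powerset_univ_sdiff_shapleyWeight hiS (mem_powerset.1 hU), sum_mul,
    ← sum_sub_distrib]
  refine sum_congr rfl fun V hV => ?_
  rw [card_union_of_disjoint (hdisj.mono (mem_powerset.1 hU) (mem_powerset.1 hV)), mul_sub]

lemma sum_shapleyWeight_product (hiS : i ∈ S) :
    ∑ UV ∈ (S.erase i).powerset ×ˢ (univ \ S).powerset, shapleyWeight d (#UV.1 + #UV.2) = 1 := by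
  rw [sum_product, ← sum_powerset_shapleyWeight_card_add_one (S.erase i), card_erase_add_one hiS]
  exact sum_congr rfl fun U hU => sum_powerset_univ_sdiff_shapleyWeight hiS (mem_powerset.1 hU)

end Decomposition

theorem restricted_shapley_error_le_two_eps_general (p : (∀ j, 𝒳 j) → 𝒴 → ℝ)
    (hpos : ∀ x y, 0 < p x y)
    (i : Fin d) (S : Finset (Fin d)) (hiS : i ∈ S)
    (ε : ℝ)
    (hIa : ∀ U ⊆ S.erase i, ∀ V ⊆ Finset.univ \ S,
      IaXY p {i} V U ≤ ε ∧ IaX p {i} V U ≤ ε) :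
    ∑ x : ∀ j, 𝒳 j, pX p x * |shapleyRes p x S i - shapley p x i| ≤ 2 * ε := by
  simp_rw [shapleyRes_sub_shapley_eq p _ hiS]
  refine sum_mul_abs_weighted_sum_le (pX_nonneg hpos) (fun _ _ => shapleyWeight_nonneg _ _)
    (sum_shapleyWeight_product hiS) ?_
  rintro ⟨U, V⟩ hUV
  obtain ⟨hU, hV⟩ : U ⊆ S.erase i ∧ V ⊆ univ \ S := by simpa using hUV
  have hiU : i ∉ U := fun h => notMem_erase i S (hU h)
  have hiV : i ∉ V := fun h => (mem_sdiff.1 (hV h)).2 hiS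
  obtain ⟨hXY, hX⟩ := hIa U hU V hV
  linarith [sum_pX_mul_abs_margContrib_sub_le hpos hiU hiV]

/-- Case 1 of the proof of Theorem 1: if, for every `U ⊆ S \ {i}` and
`V ⊆ [d] \ S`, both `I_a(X_i; X_V | X_U, Y) ≤ ε` and `I_a(X_i; X_V | X_U) ≤ ε`, then
`E_X |φ̂^S_X(i) − φ_X(i)| ≤ 2ε`. -/
theorem restricted_shapley_error_le_two_eps (p : (∀ j, 𝒳 j) → 𝒴 → ℝ)
    (hpos : ∀ x y, 0 < p x y)
    (hsum : ∑ x : ∀ j, 𝒳 j, ∑ y, p x y = 1)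
    (i : Fin d) (S : Finset (Fin d)) (hiS : i ∈ S)
    (ε : ℝ) (hε : 0 ≤ ε)
    (hIa : ∀ U ⊆ S.erase i, ∀ V ⊆ Finset.univ \ S,
      IaXY p {i} V U ≤ ε ∧ IaX p {i} V U ≤ ε) :
    ∑ x : ∀ j, 𝒳 j, pX p x * |shapleyRes p x S i - shapley p x i| ≤ 2 * ε :=
  restricted_shapley_error_le_two_eps_general p hpos i S hiS ε hIa
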